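/- Assume the standing hypotheses on H, (Y1, Y2, X), M, H0 and (𝓕, 𝓡, W). Then for every pair (i, j) ∈ {(1,2), (1,3), (2,1)} and every y ∈ Y_i, there is an edge of H containing y, a superfluous vertex s ∈ W ∩ V_j, and a vertex u ∈ V(H0). If (Y1, Y2, X) is perfectly cromulent, then this also holds for (i, j) = (2, 3). -/

import Mathlib

noncomputable section

attribute [local instance] Classical.propDecidable

universe u

variable {α : Type u}

/-- A 3-partite 3-uniform multihypergraph: vertex classes `V1, V2, V3` and a
multiset of edges, each edge being a triple with one vertex in each class
(parallel edges are allowed via multiplicities). -/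
structure TriSys (α : Type u) where
  V1 : Finset α
  V2 : Finset α
  V3 : Finset α
  h12 : Disjoint V1 V2
  h13 : Disjoint V1 V3
  h23 : Disjoint V2 V3
  edges : Multiset (α × α × α)
  mem1 : ∀ e ∈ edges, e.1 ∈ V1
  mem2 : ∀ e ∈ edges, e.2.1 ∈ V2
  mem3 : ∀ e ∈ edges, e.2.2 ∈ V3

/-- The vertex set of an edge. -/
def evset (e : α × α × α) : Finset α := {e.1, e.2.1, e.2.2}

/-- The coordinates of an edge, indexed by `Fin 3`. -/
def ecoord (e : α × α × α) : Fin 3 → α := ![e.1, e.2.1, e.2.2]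

namespace TriSys

def verts (H : TriSys α) : Finset α := H.V1 ∪ H.V2 ∪ H.V3

/-- The vertex classes, indexed by `Fin 3`. -/
def cls (H : TriSys α) : Fin 3 → Finset α := ![H.V1, H.V2, H.V3]

/-- A matching: a set of (pairwise vertex-disjoint) edges. -/
def IsMatching (H : TriSys α) (M : Finset (α × α × α)) : Prop :=
  (∀ e ∈ M, e ∈ H.edges) ∧
  (↑M : Set (α × α × α)).Pairwise fun e f => Disjoint (evset e) (evset f)

/-- The matching number ν. -/
def nu (H : TriSys α) : ℕ :=
  sSup {n : ℕ | ∃ M : Finset (α × α × α), H.IsMatching M ∧ M.card = n}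

/-- A vertex cover: a set of vertices meeting every edge. -/
def IsCover (H : TriSys α) (T : Finset α) : Prop :=
  ∀ e ∈ H.edges, ∃ v ∈ T, v ∈ evset e

/-- The vertex cover number τ. -/
def tau (H : TriSys α) : ℕ :=
  sInf {n : ℕ | ∃ T : Finset α, H.IsCover T ∧ T.card = n}

/-- Deletion of a set of vertices (and all edges meeting it). -/
def delete (H : TriSys α) (S : Finset α) : TriSys α where
  V1 := H.V1 \ S
  V2 := H.V2 \ S
  V3 := H.V3 \ S
  h12 := H.h12.mono Finset.sdiff_subset Finset.sdiff_subset
  h13 := H.h13.mono Finset.sdiff_subset Finset.sdiff_subset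
  h23 := H.h23.mono Finset.sdiff_subset Finset.sdiff_subset
  edges := H.edges.filter fun e => e.1 ∉ S ∧ e.2.1 ∉ S ∧ e.2.2 ∉ S
  mem1 := fun e he => by
    rw [Multiset.mem_filter] at he
    exact Finset.mem_sdiff.mpr ⟨H.mem1 e he.1, he.2.1⟩
  mem2 := fun e he => by
    rw [Multiset.mem_filter] at he
    exact Finset.mem_sdiff.mpr ⟨H.mem2 e he.1, he.2.2.1⟩
  mem3 := fun e he => by
    rw [Multiset.mem_filter] at he
    exact Finset.mem_sdiff.mpr ⟨H.mem3 e he.1, he.2.2.2⟩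

end TriSys

/-- The four edges of a truncated Fano plane on vertices `a,b,c,x,y,z`
(with classes `{a,x} ⊆ V1`, `{b,y} ⊆ V2`, `{c,z} ⊆ V3`). -/
def FanoEdges (a b c x y z : α) : Finset (α × α × α) :=
  {(a, b, c), (a, y, z), (x, b, z), (x, y, c)}

/-- The supports of the edges of `H` induced on a vertex subset `F`. -/
def inducedEdges (H : TriSys α) (F : Finset α) : Finset (α × α × α) :=
  (H.edges.filter fun e => evset e ⊆ F).toFinset

/-- `H` induces a truncated multi-Fano plane on the six-element set `F`. -/
def IsMultiFano (H : TriSys α) (F : Finset α) : Prop :=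
  ∃ a b c x y z : α,
    a ∈ H.V1 ∧ x ∈ H.V1 ∧ b ∈ H.V2 ∧ y ∈ H.V2 ∧ c ∈ H.V3 ∧ z ∈ H.V3 ∧
    a ≠ x ∧ b ≠ y ∧ c ≠ z ∧
    F = {a, b, c, x, y, z} ∧
    inducedEdges H F = FanoEdges a b c x y z

/-- The data of an FR-partition: the families `𝓕` and `𝓡` and the set `W`. -/
structure FRData (α : Type u) where
  Ffam : Finset (Finset α)
  Rfam : Finset (Finset α)
  W : Finset α

/-- The union of the members of a family of sets. -/
def famUnion (G : Finset (Finset α)) : Finset α := G.biUnion id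

/-- `(𝓕, 𝓡, W)` is an FR-partition of `H`. -/
def IsFRPartition (H : TriSys α) (P : FRData α) : Prop :=
  (∀ A ∈ P.Ffam, ∀ B ∈ P.Ffam, A ≠ B → Disjoint A B) ∧
  (∀ A ∈ P.Rfam, ∀ B ∈ P.Rfam, A ≠ B → Disjoint A B) ∧
  (∀ A ∈ P.Ffam, ∀ B ∈ P.Rfam, Disjoint A B) ∧
  (∀ A ∈ P.Ffam, Disjoint A P.W) ∧
  (∀ B ∈ P.Rfam, Disjoint B P.W) ∧
  famUnion P.Ffam ∪ famUnion P.Rfam ∪ P.W = H.verts ∧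
  (∀ A ∈ P.Ffam, IsMultiFano H A) ∧
  (∀ B ∈ P.Rfam, ∃ r1 ∈ H.V1, ∃ r2 ∈ H.V2, ∃ r3 ∈ H.V3, B = {r1, r2, r3}) ∧
  P.Ffam.card + P.Rfam.card = H.nu

/-- `w` is joined to `R` in the auxiliary bipartite graph `B_i`: some edge of
`H` contains `w` and two vertices of `R`. -/
def RAdj (H : TriSys α) (R : Finset α) (w : α) : Prop :=
  ∃ e ∈ H.edges, w ∈ evset e ∧ 2 ≤ (evset e ∩ R).card

/-- The auxiliary bipartite graph on `Rfam` and `Wi` has a matching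
saturating `Rfam`. -/
def SaturatingR (H : TriSys α) (Rfam : Finset (Finset α)) (Wi : Finset α) : Prop :=
  ∃ f : Finset α → α, Set.InjOn f ↑Rfam ∧ ∀ R ∈ Rfam, f R ∈ Wi ∧ RAdj H R (f R)

/-- Matchability of an FR-partition. -/
def IsMatchable (H : TriSys α) (P : FRData α) : Prop :=
  ∀ i : Fin 3, SaturatingR H P.Rfam (P.W ∩ H.cls i)

/-- The edge-home property: every edge is an `F`-edge or an `R`-edge. -/
def EdgeHome (H : TriSys α) (P : FRData α) : Prop :=
  ∀ e ∈ H.edges,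
    (∃ A ∈ P.Ffam, evset e ⊆ A) ∨ (∃ B ∈ P.Rfam, 2 ≤ (evset e ∩ B).card)

/-- A home-base partition: a matchable FR-partition with the edge-home
property. -/
def IsHomeBasePartition (H : TriSys α) (P : FRData α) : Prop :=
  IsFRPartition H P ∧ IsMatchable H P ∧ EdgeHome H P

/-- A home-base hypergraph: one admitting a home-base partition. -/
def IsHomeBase (H : TriSys α) : Prop :=
  ∃ P : FRData α, IsHomeBasePartition H P

/-- The neighborhood of a family `U` of `R`'s in the auxiliary bipartite
graph with `W`-side `Wi`. -/
def RNbhd (H : TriSys α) (Wi : Finset α) (U : Finset (Finset α)) : Finset α :=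
  Wi.filter fun w => ∃ R ∈ U, RAdj H R w

/-- `C` is an essential subset of `Wi` in the auxiliary bipartite graph:
`C = N(U)` for some `U ⊆ Rfam` with `|U| = |C|`. -/
def EssentialSet (H : TriSys α) (Rfam : Finset (Finset α)) (Wi : Finset α)
    (C : Finset α) : Prop :=
  ∃ U ⊆ Rfam, U.card = C.card ∧ RNbhd H Wi U = C

/-- `w` is a superfluous vertex of `Wi`: it lies in no essential subset
(equivalently, outside the maximal essential subset). -/
def Superfluous (H : TriSys α) (Rfam : Finset (Finset α)) (Wi : Finset α)
    (w : α) : Prop :=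
  w ∈ Wi ∧ ∀ C, EssentialSet H Rfam Wi C → w ∉ C

/-- `w` is a superfluous `W`-vertex of the FR-partition `P` (in its class). -/
def SuperfluousVert (H : TriSys α) (P : FRData α) (w : α) : Prop :=
  ∃ i : Fin 3, Superfluous H P.Rfam (P.W ∩ H.cls i) w

/-- `v` is an essential `W`-vertex of the FR-partition `P`. -/
def EssentialVertIn (H : TriSys α) (P : FRData α) (v : α) : Prop :=
  ∃ i : Fin 3, EssentialSet H P.Rfam (P.W ∩ H.cls i) {v}

/-- `v` is essential for `R`: it is the unique neighbor of `R` in some `B_i`. -/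
def EssentialForIn (H : TriSys α) (P : FRData α) (R : Finset α) (v : α) : Prop :=
  ∃ i : Fin 3, RNbhd H (P.W ∩ H.cls i) {R} = {v}

/-- The neighborhood, inside vertex class `j`, of a set `X` of class-`k`
vertices in the link graph of `H` over the remaining vertex class. -/
def nbr (H : TriSys α) (j k : Fin 3) (X : Finset α) : Finset α :=
  (H.cls j).filter fun v => ∃ e ∈ H.edges, ecoord e j = v ∧ ecoord e k ∈ X

/-- A cromulent triple `(Y1, Y2, X)` with `Y1 ⊆ V_i`, `Y2 ⊆ V_j`, `X ⊆ V_k`. -/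
def IsCromulent (H : TriSys α) (i j k : Fin 3) (Y1 Y2 X : Finset α) : Prop :=
  i ≠ j ∧ i ≠ k ∧ j ≠ k ∧
  Y1.Nonempty ∧ Y2.Nonempty ∧ X.Nonempty ∧
  Y1 ⊆ H.cls i ∧ Y2 ⊆ H.cls j ∧ X ⊆ H.cls k ∧
  Y1.card = Y2.card ∧ Y1.card ≤ X.card ∧
  nbr H j k X = Y2 ∧
  (∃ M : Finset (α × α × α), H.IsMatching M ∧ M.card = Y1.card ∧
    ∀ e ∈ M, evset e ⊆ Y1 ∪ Y2 ∪ X) ∧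
  IsHomeBase (H.delete (Y1 ∪ Y2 ∪ X)) ∧
  (H.delete (Y1 ∪ Y2 ∪ X)).nu + Y1.card = H.nu ∧
  ∀ P : FRData α, IsHomeBasePartition (H.delete (Y1 ∪ Y2 ∪ X)) P →
    nbr H i k X ⊆ Y1 ∪ famUnion P.Rfam ∪ famUnion P.Ffam

/-- A perfectly cromulent triple: condition (5) is strengthened to
`N_{Lk_{V_j}}(X) = Y1`. -/
def IsPerfCromulent (H : TriSys α) (i j k : Fin 3) (Y1 Y2 X : Finset α) : Prop :=
  i ≠ j ∧ i ≠ k ∧ j ≠ k ∧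
  Y1.Nonempty ∧ Y2.Nonempty ∧ X.Nonempty ∧
  Y1 ⊆ H.cls i ∧ Y2 ⊆ H.cls j ∧ X ⊆ H.cls k ∧
  Y1.card = Y2.card ∧ Y1.card ≤ X.card ∧
  nbr H j k X = Y2 ∧
  (∃ M : Finset (α × α × α), H.IsMatching M ∧ M.card = Y1.card ∧
    ∀ e ∈ M, evset e ⊆ Y1 ∪ Y2 ∪ X) ∧
  IsHomeBase (H.delete (Y1 ∪ Y2 ∪ X)) ∧
  (H.delete (Y1 ∪ Y2 ∪ X)).nu + Y1.card = H.nu ∧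
  nbr H i k X = Y1

/-- The link graph of `H` over the class other than `j, k` has a perfect
matching, encoded as a bijection from class `j` onto class `k` realized by
edges of `H`. -/
def LinkPerfectMatching (H : TriSys α) (j k : Fin 3) : Prop :=
  ∃ f : α → α, Set.InjOn f ↑(H.cls j) ∧ (H.cls j).image f = H.cls k ∧
    ∀ v ∈ H.cls j, ∃ e ∈ H.edges, ecoord e j = v ∧ ecoord e k = f v

/-- A proper FR-partition: no `R ∈ 𝓡` together with an edge consisting of
three `W`-vertices induces a truncated (multi-)Fano plane. -/
def IsProper (H : TriSys α) (P : FRData α) : Prop :=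
  ¬ ∃ R ∈ P.Rfam, ∃ e ∈ H.edges, evset e ⊆ P.W ∧ IsMultiFano H (R ∪ evset e)

/-!
If some `y ∈ Y₁ ∪ Y₂` lay on no such edge, then `(Y₁ ∪ Y₂) \ {y}` together with a vertex cover
of `H₀` of size `2ν(H₀)` containing every class-`j` vertex of `H₀` that is not superfluous would
cover `H`, so `τ(H) ≤ 2|Y₁| - 1 + 2ν(H₀) = 2ν(H) - 1`. An edge through `X` meets `Y₂` because
`N(X) = Y₂`; if it meets `Y₂` only in `y`, its `V₁`-vertex lies in a member of `𝓕` or `𝓡` by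
condition (5), or in `Y₁` when the triple is perfectly cromulent.
-/

open Finset

lemma mem_evset_iff {e : α × α × α} {v : α} : v ∈ evset e ↔ ∃ d, ecoord e d = v := by
  simp [evset, ecoord, Fin.exists_fin_succ, eq_comm]

lemma ecoord_mem_evset (e : α × α × α) (d : Fin 3) : ecoord e d ∈ evset e :=
  mem_evset_iff.2 ⟨d, rfl⟩

lemma ecoord_mem_or_of_two_le_card_inter {s : Finset α} {r : α × α × α}
    (h : 2 ≤ (s ∩ evset r).card) {c c' : Fin 3} (hcc : c ≠ c') :
    ecoord r c ∈ s ∨ ecoord r c' ∈ s := by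
  by_contra! hno
  have hsub : s ∩ evset r ⊆ ({c, c'}ᶜ : Finset (Fin 3)).image (ecoord r) := by
    intro v hv
    obtain ⟨hvs, d, rfl⟩ := And.imp_right mem_evset_iff.1 (mem_inter.1 hv)
    refine mem_image_of_mem _ ?_
    simp only [mem_compl, mem_insert, mem_singleton, not_or]
    exact ⟨by rintro rfl; exact hno.1 hvs, by rintro rfl; exact hno.2 hvs⟩
  have := (card_le_card hsub).trans card_image_le
  rw [card_compl, card_pair hcc, Fintype.card_fin] at this
  omega

lemma card_famUnion_inter_le (G : Finset (Finset α)) (s : Finset α) (n : ℕ)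
    (h : ∀ A ∈ G, (A ∩ s).card ≤ n) : (famUnion G ∩ s).card ≤ G.card * n := by
  rw [famUnion, biUnion_inter]
  exact card_biUnion_le_card_mul _ _ _ h

namespace TriSys

variable {H : TriSys α}

lemma forall_ecoord_mem_cls_iff {t : α × α × α} :
    (∀ d, ecoord t d ∈ H.cls d) ↔ t.1 ∈ H.V1 ∧ t.2.1 ∈ H.V2 ∧ t.2.2 ∈ H.V3 := by
  simp [Fin.forall_fin_succ, ecoord, cls]

lemma ecoord_mem_cls {e : α × α × α} (he : e ∈ H.edges) (d : Fin 3) : ecoord e d ∈ H.cls d :=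
  forall_ecoord_mem_cls_iff.2 ⟨H.mem1 e he, H.mem2 e he, H.mem3 e he⟩ d

lemma eq_of_mem_cls {v : α} {d d' : Fin 3} (h : v ∈ H.cls d) (h' : v ∈ H.cls d') : d = d' := by
  have h12 := disjoint_left.1 H.h12
  have h13 := disjoint_left.1 H.h13
  have h23 := disjoint_left.1 H.h23
  fin_cases d <;> fin_cases d' <;> simp_all [cls]

lemma cls_subset_verts (d : Fin 3) : H.cls d ⊆ H.verts := by
  intro v hv
  fin_cases d <;> simp_all [cls, verts]

lemma evset_inter_cls {t : α × α × α} (ht : ∀ d, ecoord t d ∈ H.cls d) (d : Fin 3) :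
    evset t ∩ H.cls d = {ecoord t d} := by
  ext v
  simp only [mem_inter, mem_singleton, mem_evset_iff]
  constructor
  · rintro ⟨⟨d', rfl⟩, hv⟩
    rw [eq_of_mem_cls (ht d') hv]
  · rintro rfl
    exact ⟨⟨d, rfl⟩, ht d⟩

lemma delete_cls (S : Finset α) (d : Fin 3) : (H.delete S).cls d = H.cls d \ S := by
  fin_cases d <;> rfl

lemma delete_verts (S : Finset α) : (H.delete S).verts = H.verts \ S := by
  simp [verts, delete, union_sdiff_distrib]

lemma mem_delete_edges {S : Finset α} {e : α × α × α} :
    e ∈ (H.delete S).edges ↔ e ∈ H.edges ∧ ∀ d, ecoord e d ∉ S := by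
  simp [delete, Fin.forall_fin_succ, ecoord]

lemma mem_nbr {e : α × α × α} (he : e ∈ H.edges) {j k : Fin 3} {X : Finset α}
    (h : ecoord e k ∈ X) : ecoord e j ∈ nbr H j k X :=
  mem_filter.2 ⟨ecoord_mem_cls he j, e, he, rfl, h⟩

lemma tau_le_card {T : Finset α} (hT : H.IsCover T) : H.tau ≤ T.card :=
  Nat.sInf_le ⟨T, hT, rfl⟩

end TriSys

section Essential

variable {H : TriSys α} {Rfam : Finset (Finset α)} {Wi : Finset α}

lemma RNbhd_union (U U' : Finset (Finset α)) :
    RNbhd H Wi (U ∪ U') = RNbhd H Wi U ∪ RNbhd H Wi U' := by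
  simp only [RNbhd, ← filter_or, mem_union, or_and_right, exists_or]

lemma RNbhd_mono {U U' : Finset (Finset α)} (h : U ⊆ U') : RNbhd H Wi U ⊆ RNbhd H Wi U' :=
  fun _ hw =>
    let ⟨hwW, R, hR, hRw⟩ := mem_filter.1 hw
    mem_filter.2 ⟨hwW, R, h hR, hRw⟩

lemma card_le_card_RNbhd (hsat : SaturatingR H Rfam Wi) {U : Finset (Finset α)}
    (hU : U ⊆ Rfam) : U.card ≤ (RNbhd H Wi U).card := by
  obtain ⟨f, hinj, hf⟩ := hsat
  rw [← card_image_of_injOn (hinj.mono (coe_subset.2 hU))]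
  refine card_le_card fun w hw => ?_
  obtain ⟨R, hR, rfl⟩ := mem_image.1 hw
  exact mem_filter.2 ⟨(hf R (hU hR)).1, R, hR, (hf R (hU hR)).2⟩

/-- Inclusion–exclusion and Hall's inequality for `U₁ ∩ U₂` give `|N(U₁ ∪ U₂)| ≤ |U₁ ∪ U₂|`. -/
lemma EssentialSet.union (hsat : SaturatingR H Rfam Wi) {C₁ C₂ : Finset α}
    (h₁ : EssentialSet H Rfam Wi C₁) (h₂ : EssentialSet H Rfam Wi C₂) :
    EssentialSet H Rfam Wi (C₁ ∪ C₂) := by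
  obtain ⟨U₁, hU₁, hc₁, rfl⟩ := h₁
  obtain ⟨U₂, hU₂, hc₂, rfl⟩ := h₂
  have hUnion := card_le_card_RNbhd hsat (union_subset hU₁ hU₂)
  have hInter : (U₁ ∩ U₂).card ≤ (RNbhd H Wi U₁ ∩ RNbhd H Wi U₂).card :=
    (card_le_card_RNbhd hsat (inter_subset_left.trans hU₁)).trans <| card_le_card <|
      subset_inter (RNbhd_mono inter_subset_left) (RNbhd_mono inter_subset_right)
  rw [RNbhd_union] at hUnion
  have := card_union_add_card_inter U₁ U₂
  have := card_union_add_card_inter (RNbhd H Wi U₁) (RNbhd H Wi U₂)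
  exact ⟨U₁ ∪ U₂, union_subset hU₁ hU₂, by omega, RNbhd_union U₁ U₂⟩

lemma EssentialSet.subset {C : Finset α} (hC : EssentialSet H Rfam Wi C) : C ⊆ Wi := by
  obtain ⟨U, -, -, rfl⟩ := hC
  exact filter_subset _ _

lemma exists_isGreatest_essentialSet (hsat : SaturatingR H Rfam Wi) :
    ∃ C, IsGreatest {C | EssentialSet H Rfam Wi C} C := by
  set 𝒞 := Wi.powerset.filter (EssentialSet H Rfam Wi)
  have hempty : EssentialSet H Rfam Wi ∅ := ⟨∅, empty_subset _, rfl, by simp [RNbhd]⟩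
  refine ⟨𝒞.sup id, ?_, fun C hC => le_sup (f := id) ?_⟩
  · exact SupClosed.finsetSup_mem (fun _ h₁ _ h₂ => h₁.union hsat h₂)
      ⟨∅, mem_filter.2 ⟨empty_mem_powerset _, hempty⟩⟩ fun C hC => (mem_filter.1 hC).2
  · exact mem_filter.2 ⟨mem_powerset.2 hC.subset, hC⟩

end Essential

section HomeBase

variable {H : TriSys α} {P : FRData α}

lemma IsMultiFano.exists_eq_evset_union {F : Finset α} (hF : IsMultiFano H F) :
    ∃ t t' : α × α × α, (∀ d, ecoord t d ∈ H.cls d) ∧ (∀ d, ecoord t' d ∈ H.cls d) ∧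
      F = evset t ∪ evset t' := by
  obtain ⟨a, b, c, x, y, z, ha, hx, hb, hy, hc, hz, -, -, -, rfl, -⟩ := hF
  exact ⟨(a, b, c), (x, y, z), TriSys.forall_ecoord_mem_cls_iff.2 ⟨ha, hb, hc⟩,
    TriSys.forall_ecoord_mem_cls_iff.2 ⟨hx, hy, hz⟩,
    by simp only [evset, insert_union, singleton_union]⟩

lemma IsFRPartition.exists_eq_evset (hP : IsFRPartition H P) {R : Finset α} (hR : R ∈ P.Rfam) :
    ∃ r : α × α × α, (∀ d, ecoord r d ∈ H.cls d) ∧ R = evset r := by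
  obtain ⟨-, -, -, -, -, -, -, hRfam, -⟩ := hP
  obtain ⟨r₁, h₁, r₂, h₂, r₃, h₃, rfl⟩ := hRfam R hR
  exact ⟨(r₁, r₂, r₃), TriSys.forall_ecoord_mem_cls_iff.2 ⟨h₁, h₂, h₃⟩, rfl⟩

lemma IsFRPartition.card_famUnion_Ffam_inter_cls_le (hP : IsFRPartition H P) (d : Fin 3) :
    (famUnion P.Ffam ∩ H.cls d).card ≤ P.Ffam.card * 2 := by
  obtain ⟨-, -, -, -, -, -, hFfam, -⟩ := hP
  refine card_famUnion_inter_le _ _ _ fun F hF => ?_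
  obtain ⟨t, t', ht, ht', rfl⟩ := (hFfam F hF).exists_eq_evset_union
  rw [union_inter_distrib_right, TriSys.evset_inter_cls ht, TriSys.evset_inter_cls ht']
  exact card_union_le _ _

lemma IsFRPartition.card_famUnion_inter_cls_le (hP : IsFRPartition H P) {G : Finset (Finset α)}
    (hG : G ⊆ P.Rfam) (d : Fin 3) : (famUnion G ∩ H.cls d).card ≤ G.card := by
  refine (card_famUnion_inter_le _ _ 1 fun R hR => ?_).trans_eq (mul_one _)
  obtain ⟨r, hr, rfl⟩ := hP.exists_eq_evset (hG hR)
  rw [TriSys.evset_inter_cls hr, card_singleton]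

lemma IsFRPartition.famUnion_union_W (hP : IsFRPartition H P) :
    famUnion P.Ffam ∪ famUnion P.Rfam ∪ P.W = H.verts :=
  hP.2.2.2.2.2.1

lemma IsFRPartition.notMem_W (hP : IsFRPartition H P) {v : α}
    (hv : v ∈ famUnion P.Ffam ∪ famUnion P.Rfam) : v ∉ P.W := by
  obtain ⟨-, -, -, hFW, hRW, -⟩ := hP
  rcases mem_union.1 hv with hv | hv <;> obtain ⟨A, hA, hvA⟩ := mem_biUnion.1 hv
  exacts [disjoint_left.1 (hFW A hA) hvA, disjoint_left.1 (hRW A hA) hvA]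

/-- The cover consists of the class-`c` vertices of all members of `𝓕` and `𝓡`, the greatest
essential set `C = N(U)` of `B_c`, and, for every `R ∉ U`, the vertex of `R` in a second class
`c'`. An `R`-edge missing both chosen vertices of `R` must have `R ∈ U`, and then its class-`c`
vertex lies in `N(U)` or outside `W`. -/
theorem IsHomeBasePartition.exists_cover (hP : IsHomeBasePartition H P) (c : Fin 3) :
    ∃ T : Finset α, T.card ≤ 2 * H.nu ∧ H.IsCover T ∧
      ∀ v ∈ H.cls c, ¬ Superfluous H P.Rfam (P.W ∩ H.cls c) v → v ∈ T := by
  obtain ⟨hFR, hmatch, hhome⟩ := hP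
  have ⟨_, _, _, _, _, _, _, _, hnu⟩ := hFR
  obtain ⟨C, ⟨U, hU, hUC, rfl⟩, hCmax⟩ := exists_isGreatest_essentialSet (hmatch c)
  obtain ⟨c', hc'⟩ := exists_ne c
  set T := ((famUnion P.Ffam ∪ famUnion P.Rfam) ∩ H.cls c ∪ famUnion (P.Rfam \ U) ∩ H.cls c') ∪
    RNbhd H (P.W ∩ H.cls c) U
  have hFRT : ∀ v ∈ famUnion P.Ffam ∪ famUnion P.Rfam, v ∈ H.cls c → v ∈ T := fun v h hc =>
    mem_union_left _ (mem_union_left _ (mem_inter.2 ⟨h, hc⟩))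
  have hnonsf : ∀ v ∈ H.cls c, ¬ Superfluous H P.Rfam (P.W ∩ H.cls c) v → v ∈ T := by
    intro v hvc hv
    rcases mem_union.1 (hFR.famUnion_union_W.ge (TriSys.cls_subset_verts c hvc)) with hvFR | hvW
    · exact hFRT v hvFR hvc
    · simp only [Superfluous, not_and, not_forall, not_not] at hv
      obtain ⟨C', hC', hvC'⟩ := hv (mem_inter.2 ⟨hvW, hvc⟩)
      exact mem_union_right _ (hCmax hC' hvC')
  refine ⟨T, ?_, fun e he => ?_, hnonsf⟩
  · calc T.card ≤ (famUnion P.Ffam ∩ H.cls c).card + (famUnion P.Rfam ∩ H.cls c).card +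
          (famUnion (P.Rfam \ U) ∩ H.cls c').card + (RNbhd H (P.W ∩ H.cls c) U).card := by
          simp only [T, union_inter_distrib_right]
          grw [card_union_le, card_union_le, card_union_le]
      _ ≤ P.Ffam.card * 2 + P.Rfam.card + (P.Rfam \ U).card + U.card := by
          grw [hFR.card_famUnion_Ffam_inter_cls_le, hFR.card_famUnion_inter_cls_le subset_rfl,
            hFR.card_famUnion_inter_cls_le sdiff_subset, hUC]
      _ = 2 * H.nu := by
          rw [card_sdiff_of_subset hU, ← hnu]
          have := card_le_card hU
          omega
  rcases hhome e he with ⟨F, hF, heF⟩ | ⟨R, hR, h2⟩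
  · exact ⟨ecoord e c, hFRT _ (mem_union_left _ (mem_biUnion.2 ⟨F, hF, heF (ecoord_mem_evset e c)⟩))
      (TriSys.ecoord_mem_cls he c), ecoord_mem_evset e c⟩
  obtain ⟨r, hr, rfl⟩ := hFR.exists_eq_evset hR
  by_cases hRU : evset r ∈ U
  · refine ⟨ecoord e c, hnonsf _ (TriSys.ecoord_mem_cls he c) fun hs => ?_, ecoord_mem_evset e c⟩
    exact hs.2 _ ⟨U, hU, hUC, rfl⟩ (mem_filter.2 ⟨hs.1, _, hRU, e, he, ecoord_mem_evset e c, h2⟩)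
  rcases ecoord_mem_or_of_two_le_card_inter h2 hc'.symm with h | h
  · exact ⟨_, hFRT _ (mem_union_right _ (mem_biUnion.2 ⟨_, hR, ecoord_mem_evset r c⟩)) (hr c), h⟩
  · exact ⟨_, mem_union_left _ (mem_union_right _ (mem_inter.2
      ⟨mem_biUnion.2 ⟨_, mem_sdiff.2 ⟨hR, hRU⟩, ecoord_mem_evset r c'⟩, hr c'⟩)), h⟩

end HomeBase

namespace TriSys

variable {H : TriSys α}

lemma tau_le_card_add_two_mul_nu {H₀ : TriSys α} {P : FRData α}
    (hP : IsHomeBasePartition H₀ P) {c : Fin 3} {A : Finset α}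
    (hcov : ∀ e ∈ H.edges, (∃ v ∈ A, v ∈ evset e) ∨ e ∈ H₀.edges ∨
      (ecoord e c ∈ H₀.cls c ∧ ¬ Superfluous H₀ P.Rfam (P.W ∩ H₀.cls c) (ecoord e c))) :
    H.tau ≤ A.card + 2 * H₀.nu := by
  obtain ⟨T, hTcard, hTcov, hT⟩ := hP.exists_cover c
  have hcover : H.IsCover (A ∪ T) := by
    intro e he
    rcases hcov e he with ⟨v, hv, hve⟩ | he₀ | ⟨hc, hs⟩
    · exact ⟨v, mem_union_left _ hv, hve⟩
    · obtain ⟨v, hv, hve⟩ := hTcov e he₀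
      exact ⟨v, mem_union_right _ hv, hve⟩
    · exact ⟨_, mem_union_right _ (hT _ hc hs), ecoord_mem_evset e c⟩
  grw [tau_le_card hcover, card_union_le, hTcard]

lemma mem_delete_edges_or_of_forall_notMem_erase {Y₁ Y₂ X : Finset α} (hX : X ⊆ H.cls 2)
    (hnbr : nbr H 1 2 X ⊆ Y₂) {i : Fin 3} {y : α} (hyi : y ∈ H.cls i) {e : α × α × α}
    (he : e ∈ H.edges) (hA : ∀ d, ecoord e d ∉ (Y₁ ∪ Y₂).erase y) :
    e ∈ (H.delete (Y₁ ∪ Y₂ ∪ X)).edges ∨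
      (ecoord e 1 = y ∧ ecoord e 2 ∈ X ∧ ecoord e 0 ∉ Y₁) ∨
      (ecoord e i = y ∧ ∀ d ≠ i, ecoord e d ∉ Y₁ ∪ Y₂ ∪ X) := by
  have hy : ∀ d, ecoord e d ∈ Y₁ ∪ Y₂ → ecoord e d = y := fun d hd =>
    of_not_not fun hne => hA d (mem_erase.2 ⟨hne, hd⟩)
  by_cases hr : ecoord e 2 ∈ X
  · have hq := hy 1 (mem_union_right _ (hnbr (mem_nbr he hr)))
    refine Or.inr (Or.inl ⟨hq, hr, fun hp => ?_⟩)
    have h01 := eq_of_mem_cls (ecoord_mem_cls he 0)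
      ((hy 0 (mem_union_left _ hp)).trans hq.symm ▸ ecoord_mem_cls he 1)
    exact absurd h01 (by decide)
  have hS : ∀ d, ecoord e d ∈ Y₁ ∪ Y₂ ∪ X → ecoord e d = y := by
    intro d hd
    rcases mem_union.1 hd with hd | hd
    · exact hy d hd
    · obtain rfl := eq_of_mem_cls (ecoord_mem_cls he d) (hX hd)
      exact absurd hd hr
  by_cases hmeet : ∃ d, ecoord e d ∈ Y₁ ∪ Y₂ ∪ X
  · obtain ⟨d, hd⟩ := hmeet
    have hdi := eq_of_mem_cls (hS d hd ▸ ecoord_mem_cls he d) hyi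
    subst hdi
    refine Or.inr (Or.inr ⟨hS d hd, fun d' hd' hS' => hd' ?_⟩)
    exact eq_of_mem_cls (hS d' hS' ▸ ecoord_mem_cls he d') hyi
  · exact Or.inl (mem_delete_edges.2 ⟨he, not_exists.1 hmeet⟩)

end TriSys

section Cromulent

open TriSys

variable {H : TriSys α}

lemma IsCromulent.mem_delete_cls_zero_of_mem_nbr {Y₁ Y₂ X : Finset α}
    (hcrom : IsCromulent H 0 1 2 Y₁ Y₂ X) {P : FRData α}
    (hP : IsHomeBasePartition (H.delete (Y₁ ∪ Y₂ ∪ X)) P) {v : α} (hv : v ∈ nbr H 0 2 X)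
    (hvY : v ∉ Y₁) : v ∈ (H.delete (Y₁ ∪ Y₂ ∪ X)).cls 0 ∧ v ∉ P.W := by
  obtain ⟨-, -, -, -, -, -, -, -, -, -, -, -, -, -, -, hnbrX⟩ := hcrom
  have hvFR : v ∈ famUnion P.Ffam ∪ famUnion P.Rfam := by
    have := hnbrX P hP hv
    simp only [mem_union] at this ⊢
    tauto
  have hv₀ := hP.1.famUnion_union_W.le (mem_union_left _ hvFR)
  rw [delete_verts] at hv₀
  rw [delete_cls]
  exact ⟨mem_sdiff.2 ⟨(mem_filter.1 hv).1, (mem_sdiff.1 hv₀).2⟩, hP.1.notMem_W hvFR⟩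

theorem IsCromulent.exists_edge_superfluous (htau : 2 * H.nu ≤ H.tau) {Y₁ Y₂ X : Finset α}
    (hcrom : IsCromulent H 0 1 2 Y₁ Y₂ X) {P : FRData α}
    (hP : IsHomeBasePartition (H.delete (Y₁ ∪ Y₂ ∪ X)) P) {i c : Fin 3} (hic : i ≠ c) {y : α}
    (hyY : y ∈ Y₁ ∪ Y₂) (hyi : y ∈ H.cls i)
    (hX : ∀ e ∈ H.edges, ecoord e i = y → ecoord e 2 ∈ X → ecoord e 0 ∉ Y₁ →
      ecoord e c ∈ (H.delete (Y₁ ∪ Y₂ ∪ X)).cls c ∧ ecoord e c ∉ P.W) :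
    ∃ e ∈ H.edges, ecoord e i = y ∧
      Superfluous (H.delete (Y₁ ∪ Y₂ ∪ X)) P.Rfam (P.W ∩ (H.delete (Y₁ ∪ Y₂ ∪ X)).cls c)
        (ecoord e c) ∧
      ∀ d ≠ i, ecoord e d ∈ (H.delete (Y₁ ∪ Y₂ ∪ X)).verts := by
  obtain ⟨-, -, -, -, -, -, -, -, hXc, hcard, -, hnbr, -, -, hnu, -⟩ := hcrom
  by_contra! hno
  have hlt : ((Y₁ ∪ Y₂).erase y).card + 2 * (H.delete (Y₁ ∪ Y₂ ∪ X)).nu < H.tau := by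
    have := card_union_le Y₁ Y₂
    have := card_erase_of_mem hyY
    have := card_pos.2 ⟨y, hyY⟩
    omega
  refine hlt.not_ge (tau_le_card_add_two_mul_nu hP (c := c) fun e he => ?_)
  by_cases hA : ∃ d, ecoord e d ∈ (Y₁ ∪ Y₂).erase y
  · obtain ⟨d, hd⟩ := hA
    exact Or.inl ⟨_, hd, ecoord_mem_evset e d⟩
  rcases mem_delete_edges_or_of_forall_notMem_erase hXc hnbr.le hyi he (not_exists.1 hA) with
    he₀ | ⟨hq, hr, hp⟩ | ⟨hi, hout⟩
  · exact Or.inr (Or.inl he₀)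
  · obtain rfl := eq_of_mem_cls (hq ▸ ecoord_mem_cls he 1) hyi
    obtain ⟨hc, hW⟩ := hX e he hq hr hp
    exact Or.inr (Or.inr ⟨hc, fun hs => hW (mem_inter.1 hs.1).1⟩)
  · refine Or.inr (Or.inr ⟨?_, fun hs => ?_⟩)
    · rw [delete_cls]
      exact mem_sdiff.2 ⟨ecoord_mem_cls he c, hout c hic.symm⟩
    · obtain ⟨d, hd, hdv⟩ := hno e he hi hs
      rw [delete_verts] at hdv
      exact hdv (mem_sdiff.2 ⟨cls_subset_verts d (ecoord_mem_cls he d), hout d hd⟩)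

end Cromulent

theorem exists_edge_through_superfluous_general
    (H : TriSys α) (htau : H.tau = 2 * H.nu)
    (Y1 Y2 X : Finset α)
    (hcrom : IsCromulent H 0 1 2 Y1 Y2 X)
    (P : FRData α)
    (hP : IsHomeBasePartition (H.delete (Y1 ∪ Y2 ∪ X)) P) :
    (∀ y ∈ Y1, ∃ s u : α, (y, s, u) ∈ H.edges ∧
        Superfluous (H.delete (Y1 ∪ Y2 ∪ X)) P.Rfam
          (P.W ∩ (H.delete (Y1 ∪ Y2 ∪ X)).cls 1) s ∧
        u ∈ (H.delete (Y1 ∪ Y2 ∪ X)).verts) ∧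
    (∀ y ∈ Y1, ∃ s u : α, (y, u, s) ∈ H.edges ∧
        Superfluous (H.delete (Y1 ∪ Y2 ∪ X)) P.Rfam
          (P.W ∩ (H.delete (Y1 ∪ Y2 ∪ X)).cls 2) s ∧
        u ∈ (H.delete (Y1 ∪ Y2 ∪ X)).verts) ∧
    (∀ y ∈ Y2, ∃ s u : α, (s, y, u) ∈ H.edges ∧
        Superfluous (H.delete (Y1 ∪ Y2 ∪ X)) P.Rfam
          (P.W ∩ (H.delete (Y1 ∪ Y2 ∪ X)).cls 0) s ∧
        u ∈ (H.delete (Y1 ∪ Y2 ∪ X)).verts) ∧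
    (IsPerfCromulent H 0 1 2 Y1 Y2 X →
      ∀ y ∈ Y2, ∃ s u : α, (u, y, s) ∈ H.edges ∧
        Superfluous (H.delete (Y1 ∪ Y2 ∪ X)) P.Rfam
          (P.W ∩ (H.delete (Y1 ∪ Y2 ∪ X)).cls 2) s ∧
        u ∈ (H.delete (Y1 ∪ Y2 ∪ X)).verts) := by
  have ⟨_, _, _, _, _, _, hY1, hY2, _⟩ := hcrom
  refine ⟨fun y hy => ?_, fun y hy => ?_, fun y hy => ?_, fun hperf y hy => ?_⟩
  · obtain ⟨⟨p, q, r⟩, he, rfl, hs, hu⟩ := hcrom.exists_edge_superfluous htau.ge hP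
      (i := 0) (c := 1) (by decide) (mem_union_left _ hy) (hY1 hy)
      fun e _ h _ hp => absurd (h ▸ hy) hp
    exact ⟨q, r, he, hs, hu 2 (by decide)⟩
  · obtain ⟨⟨p, q, r⟩, he, rfl, hs, hu⟩ := hcrom.exists_edge_superfluous htau.ge hP
      (i := 0) (c := 2) (by decide) (mem_union_left _ hy) (hY1 hy)
      fun e _ h _ hp => absurd (h ▸ hy) hp
    exact ⟨r, q, he, hs, hu 1 (by decide)⟩
  · obtain ⟨⟨p, q, r⟩, he, rfl, hs, hu⟩ := hcrom.exists_edge_superfluous htau.ge hP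
      (i := 1) (c := 0) (by decide) (mem_union_right _ hy) (hY2 hy)
      fun e he _ hr hp => hcrom.mem_delete_cls_zero_of_mem_nbr hP (TriSys.mem_nbr he hr) hp
    exact ⟨p, r, he, hs, hu 2 (by decide)⟩
  · obtain ⟨-, -, -, -, -, -, -, -, -, -, -, -, -, -, -, hnbrX⟩ := hperf
    obtain ⟨⟨p, q, r⟩, he, rfl, hs, hu⟩ := hcrom.exists_edge_superfluous htau.ge hP
      (i := 1) (c := 2) (by decide) (mem_union_right _ hy) (hY2 hy)
      fun e he _ hr hp => absurd (hnbrX ▸ TriSys.mem_nbr he hr) hp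
    exact ⟨r, p, he, hs, hu 0 (by decide)⟩

/-- Under the standing hypotheses, for each pair `(i, j)` among
`(1,2), (1,3), (2,1)` and every `y ∈ Y_i`, there is an edge of `H` containing
`y`, a superfluous vertex `s ∈ W ∩ V_j`, and a vertex `u ∈ V(H₀)`; if the
triple is perfectly cromulent this also holds for `(i, j) = (2, 3)`. -/
theorem exists_edge_through_superfluous
    (H : TriSys α) (htau : H.tau = 2 * H.nu)
    (Y1 Y2 X : Finset α)
    (hcrom : IsCromulent H 0 1 2 Y1 Y2 X)
    (M : Finset (α × α × α)) (hM : H.IsMatching M)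
    (hMcard : M.card = Y1.card)
    (hMsub : ∀ e ∈ M, evset e ⊆ Y1 ∪ Y2 ∪ X)
    (P : FRData α)
    (hP : IsHomeBasePartition (H.delete (Y1 ∪ Y2 ∪ X)) P) :
    (∀ y ∈ Y1, ∃ s u : α, (y, s, u) ∈ H.edges ∧
        Superfluous (H.delete (Y1 ∪ Y2 ∪ X)) P.Rfam
          (P.W ∩ (H.delete (Y1 ∪ Y2 ∪ X)).cls 1) s ∧
        u ∈ (H.delete (Y1 ∪ Y2 ∪ X)).verts) ∧
    (∀ y ∈ Y1, ∃ s u : α, (y, u, s) ∈ H.edges ∧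
        Superfluous (H.delete (Y1 ∪ Y2 ∪ X)) P.Rfam
          (P.W ∩ (H.delete (Y1 ∪ Y2 ∪ X)).cls 2) s ∧
        u ∈ (H.delete (Y1 ∪ Y2 ∪ X)).verts) ∧
    (∀ y ∈ Y2, ∃ s u : α, (s, y, u) ∈ H.edges ∧
        Superfluous (H.delete (Y1 ∪ Y2 ∪ X)) P.Rfam
          (P.W ∩ (H.delete (Y1 ∪ Y2 ∪ X)).cls 0) s ∧
        u ∈ (H.delete (Y1 ∪ Y2 ∪ X)).verts) ∧
    (IsPerfCromulent H 0 1 2 Y1 Y2 X →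
      ∀ y ∈ Y2, ∃ s u : α, (u, y, s) ∈ H.edges ∧
        Superfluous (H.delete (Y1 ∪ Y2 ∪ X)) P.Rfam
          (P.W ∩ (H.delete (Y1 ∪ Y2 ∪ X)).cls 2) s ∧
        u ∈ (H.delete (Y1 ∪ Y2 ∪ X)).verts) :=
  exists_edge_through_superfluous_general H htau Y1 Y2 X hcrom P hP
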